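/- Let A be a multiplicative subgroup of Z_p^* and k ≥ 1. If |A| > p^{1/2 + 1/(2k)}, then the k-fold sumset kA = {x_1+...+x_k : x_i ∈ A} contains all of Z_p^*. -/

import Mathlib

/-!
Let `ψ` be a primitive additive character of a field with `q` elements and
`S(l) = ∑_{a ∈ A} ψ (l a)`. If `x ≠ 0` is not a sum of `k` elements of `A`, then neither is any
`x b` with `b ∈ A`, so orthogonality of characters gives `∑_l S(l)^k conj (S(x l)) = 0`. The term
`l = 0` is `|A|^(k+1)`. Since `S` is constant on the coset `l A`, Parseval gives
`|A| |S(l)|² ≤ q |A| - |A|²` for `l ≠ 0`, so `|S(l)| ≤ √q`. Bounding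
`|S(l)|^k |S(x l)| ≤ √q^(k-1) |S(l)| |S(x l)|` and using AM-GM and Parseval once more,
`|A|^(k+1) ≤ √q^(k-1) (q |A| - |A|²) < √q^(k+1) |A|`, that is `|A|^k < q^((k+1)/2)`.
-/

open Finset Pointwise

/-- `A` is (the underlying set of) a multiplicative subgroup of `ℤ_p^*`. -/
def mulSubgroup (p : ℕ) (A : Finset (ZMod p)) : Prop :=
  (0 : ZMod p) ∉ A ∧ (1 : ZMod p) ∈ A ∧
    (∀ x ∈ A, ∀ y ∈ A, x * y ∈ A) ∧ ∀ x ∈ A, x⁻¹ ∈ A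

open ComplexConjugate

theorem AddChar.map_sum_eq_prod {G M ι : Type*} [AddCommMonoid G] [CommMonoid M]
    (ψ : AddChar G M) (s : Finset ι) (g : ι → G) : ψ (∑ i ∈ s, g i) = ∏ i ∈ s, ψ (g i) := by
  classical
  induction s using Finset.induction_on with
  | empty => simp
  | insert a s ha ih => rw [sum_insert ha, prod_insert ha, AddChar.map_add_eq_mul, ih]

section CommRing

variable {R : Type*} [CommRing R] {ψ : AddChar R ℂ}

noncomputable def expSum (ψ : AddChar R ℂ) (A : Finset R) (l : R) : ℂ :=
  ∑ a ∈ A, ψ (l * a)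

lemma expSum_zero (A : Finset R) : expSum ψ A 0 = #A := by
  simp [expSum]

lemma expSum_pow (A : Finset R) (k : ℕ) (l : R) :
    expSum ψ A l ^ k = ∑ f ∈ Fintype.piFinset (fun _ : Fin k => A), ψ (l * ∑ i, f i) := by
  rw [expSum, ← Fin.prod_const, prod_univ_sum]
  simp_rw [mul_sum, AddChar.map_sum_eq_prod]

variable [Fintype R] [DecidableEq R]

theorem sum_mul_conj_eq_card_mul_card_filter (hψ : ψ.IsPrimitive) {ι κ : Type*}
    (s : Finset ι) (t : Finset κ) (g : ι → R) (h : κ → R) :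
    ∑ l, (∑ i ∈ s, ψ (l * g i)) * conj (∑ j ∈ t, ψ (l * h j)) =
      Fintype.card R * #{ij ∈ s ×ˢ t | g ij.1 = h ij.2} := by
  have hterm (l : R) (i : ι) (j : κ) :
      ψ (l * g i) * conj (ψ (l * h j)) = ψ (l * (g i - h j)) := by
    rw [← AddChar.map_neg_eq_conj, ← AddChar.map_add_eq_mul, mul_sub, sub_eq_add_neg]
  simp_rw [map_sum, sum_mul_sum, hterm]
  rw [sum_comm, sum_congr rfl fun i _ => sum_comm]
  simp_rw [AddChar.sum_mulShift _ hψ, sub_eq_zero]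
  rw [card_filter, sum_product]
  push_cast
  simp_rw [mul_sum, mul_ite, mul_one, mul_zero]

theorem sum_norm_sq_expSum (hψ : ψ.IsPrimitive) (A : Finset R) :
    ∑ l, ‖expSum ψ A l‖ ^ 2 = Fintype.card R * #A := by
  have h : ∑ l, expSum ψ A l * conj (expSum ψ A l) = Fintype.card R * #A := by
    rw [← diag_card A, diag_eq_filter]
    exact sum_mul_conj_eq_card_mul_card_filter hψ A A id id
  simp_rw [Complex.mul_conj, Complex.normSq_eq_norm_sq] at h
  exact_mod_cast h

theorem sum_erase_zero_norm_sq_expSum (hψ : ψ.IsPrimitive) (A : Finset R) :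
    ∑ l ∈ univ.erase 0, ‖expSum ψ A l‖ ^ 2 = Fintype.card R * #A - #A ^ 2 := by
  rw [sum_erase_eq_sub (mem_univ 0), sum_norm_sq_expSum hψ, expSum_zero]
  simp

theorem sum_expSum_pow_mul_conj_eq_zero (hψ : ψ.IsPrimitive) {A : Finset R} {k : ℕ} {x : R}
    (hno : ∀ f ∈ Fintype.piFinset (fun _ : Fin k => A), ∀ b ∈ A, ∑ i, f i ≠ x * b) :
    ∑ l, expSum ψ A l ^ k * conj (expSum ψ A (x * l)) = 0 := by
  have hx (l : R) : expSum ψ A (x * l) = ∑ b ∈ A, ψ (l * (x * b)) :=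
    sum_congr rfl fun b _ => congrArg ψ (by ring)
  simp_rw [expSum_pow, hx]
  rw [sum_mul_conj_eq_card_mul_card_filter hψ, filter_eq_empty_iff.2, card_empty,
    Nat.cast_zero, mul_zero]
  rintro ⟨f, b⟩ hfb
  exact hno f (mem_product.1 hfb).1 b (mem_product.1 hfb).2

end CommRing

section Field

variable {F : Type*} [Field F] {ψ : AddChar F ℂ} {A : Finset F}

lemma sum_ne_mul_of_sum_ne (h0 : (0 : F) ∉ A) (hmul : ∀ x ∈ A, ∀ y ∈ A, x * y ∈ A)
    (hinv : ∀ x ∈ A, x⁻¹ ∈ A) {k : ℕ} {x : F}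
    (hno : ∀ f : Fin k → F, (∀ i, f i ∈ A) → ∑ i, f i ≠ x) :
    ∀ f ∈ Fintype.piFinset (fun _ : Fin k => A), ∀ b ∈ A, ∑ i, f i ≠ x * b := by
  intro f hf b hb hsum
  refine hno (fun i => f i * b⁻¹) (fun i => hmul _ (Fintype.mem_piFinset.1 hf i) _ (hinv b hb)) ?_
  rw [← sum_mul, hsum, mul_inv_cancel_right₀ (ne_of_mem_of_not_mem hb h0)]

variable [DecidableEq F]

lemma image_mul_left_eq_self (h0 : (0 : F) ∉ A) (hmul : ∀ x ∈ A, ∀ y ∈ A, x * y ∈ A)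
    {a : F} (ha : a ∈ A) : A.image (a * ·) = A :=
  eq_of_subset_of_card_le (image_subset_iff.2 fun b hb => hmul a ha b hb)
    (card_image_of_injective _ (mul_right_injective₀ (ne_of_mem_of_not_mem ha h0))).ge

lemma expSum_mul_of_mem (h0 : (0 : F) ∉ A) (hmul : ∀ x ∈ A, ∀ y ∈ A, x * y ∈ A)
    {a : F} (ha : a ∈ A) (l : F) : expSum ψ A (l * a) = expSum ψ A l := by
  conv_rhs => rw [expSum, ← image_mul_left_eq_self h0 hmul ha,
    sum_image (mul_right_injective₀ (ne_of_mem_of_not_mem ha h0)).injOn]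
  simp only [expSum, mul_assoc]

variable [Fintype F]

lemma card_mul_norm_sq_expSum_le (hψ : ψ.IsPrimitive) (h0 : (0 : F) ∉ A)
    (hmul : ∀ x ∈ A, ∀ y ∈ A, x * y ∈ A) {l : F} (hl : l ≠ 0) :
    #A * ‖expSum ψ A l‖ ^ 2 ≤ Fintype.card F * #A - #A ^ 2 := by
  calc (#A : ℝ) * ‖expSum ψ A l‖ ^ 2 = ∑ a ∈ A, ‖expSum ψ A (l * a)‖ ^ 2 := by
        rw [sum_congr rfl fun a ha => by rw [expSum_mul_of_mem h0 hmul ha], sum_const,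
          nsmul_eq_mul]
    _ = ∑ m ∈ A.image (l * ·), ‖expSum ψ A m‖ ^ 2 :=
        (sum_image (f := fun m => ‖expSum ψ A m‖ ^ 2) (mul_right_injective₀ hl).injOn).symm
    _ ≤ ∑ m ∈ univ.erase 0, ‖expSum ψ A m‖ ^ 2 := by
        refine sum_le_sum_of_subset_of_nonneg ?_ fun _ _ _ => sq_nonneg _
        simp only [subset_iff, mem_image, mem_erase]
        rintro _ ⟨a, ha, rfl⟩
        exact ⟨mul_ne_zero hl (ne_of_mem_of_not_mem ha h0), mem_univ _⟩
    _ = _ := sum_erase_zero_norm_sq_expSum hψ A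

theorem norm_expSum_le_sqrt (hψ : ψ.IsPrimitive) (h0 : (0 : F) ∉ A)
    (hmul : ∀ x ∈ A, ∀ y ∈ A, x * y ∈ A) {l : F} (hl : l ≠ 0) :
    ‖expSum ψ A l‖ ≤ √(Fintype.card F) := by
  rcases A.eq_empty_or_nonempty with rfl | hA
  · simp [expSum]
  rw [Real.le_sqrt (norm_nonneg _) (Nat.cast_nonneg _)]
  refine le_of_mul_le_mul_left ?_ (Nat.cast_pos.2 hA.card_pos : (0 : ℝ) < #A)
  nlinarith [card_mul_norm_sq_expSum_le hψ h0 hmul hl]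

theorem sum_erase_zero_norm_expSum_mul_le (hψ : ψ.IsPrimitive) (A : Finset F) {x : F}
    (hx : x ≠ 0) :
    ∑ l ∈ univ.erase 0, ‖expSum ψ A l‖ * ‖expSum ψ A (x * l)‖ ≤
      Fintype.card F * #A - #A ^ 2 := by
  have hdil : ∑ l ∈ univ.erase 0, ‖expSum ψ A (x * l)‖ ^ 2 =
      ∑ l ∈ univ.erase 0, ‖expSum ψ A l‖ ^ 2 := by
    rw [sum_erase_eq_sub (mem_univ 0), sum_erase_eq_sub (mem_univ 0), mul_zero]
    congr 1
    exact Equiv.sum_comp (Equiv.mulLeft₀ x hx) fun l => ‖expSum ψ A l‖ ^ 2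
  calc _ ≤ ∑ l ∈ univ.erase 0, (‖expSum ψ A l‖ ^ 2 + ‖expSum ψ A (x * l)‖ ^ 2) / 2 :=
        sum_le_sum fun l _ => by
          nlinarith [sq_nonneg (‖expSum ψ A l‖ - ‖expSum ψ A (x * l)‖)]
    _ = _ := by
        rw [← sum_div, sum_add_distrib, hdil, sum_erase_zero_norm_sq_expSum hψ]
        ring

theorem card_pow_succ_le (hψ : ψ.IsPrimitive) (h0 : (0 : F) ∉ A)
    (hmul : ∀ x ∈ A, ∀ y ∈ A, x * y ∈ A) {k : ℕ} (hk : 1 ≤ k) {x : F} (hx : x ≠ 0)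
    (hno : ∀ f ∈ Fintype.piFinset (fun _ : Fin k => A), ∀ b ∈ A, ∑ i, f i ≠ x * b) :
    (#A : ℝ) ^ (k + 1) ≤ √(Fintype.card F) ^ (k - 1) * (Fintype.card F * #A - #A ^ 2) := by
  have hsplit :=
    add_sum_erase univ (fun l => expSum ψ A l ^ k * conj (expSum ψ A (x * l))) (mem_univ 0)
  rw [sum_expSum_pow_mul_conj_eq_zero hψ hno, mul_zero, expSum_zero, map_natCast, ← pow_succ,
    add_eq_zero_iff_eq_neg] at hsplit
  set S := expSum ψ A
  calc (#A : ℝ) ^ (k + 1) = ‖∑ l ∈ univ.erase 0, S l ^ k * conj (S (x * l))‖ := by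
        rw [← norm_neg, ← hsplit, norm_pow, Complex.norm_natCast]
    _ ≤ ∑ l ∈ univ.erase 0, ‖S l‖ ^ (k - 1) * (‖S l‖ * ‖S (x * l)‖) :=
        norm_sum_le_of_le _ fun l _ => by
          rw [norm_mul, norm_pow, RCLike.norm_conj, ← mul_assoc, ← pow_succ,
            Nat.sub_add_cancel hk]
    _ ≤ ∑ l ∈ univ.erase 0, √(Fintype.card F) ^ (k - 1) * (‖S l‖ * ‖S (x * l)‖) :=
        sum_le_sum fun l hl => by
          gcongr
          exact norm_expSum_le_sqrt hψ h0 hmul (ne_of_mem_erase hl)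
    _ ≤ _ := by
        rw [← mul_sum]
        gcongr
        exact sum_erase_zero_norm_expSum_mul_le hψ A hx

theorem card_pow_lt_sqrt_pow (hψ : ψ.IsPrimitive) (h0 : (0 : F) ∉ A)
    (hmul : ∀ x ∈ A, ∀ y ∈ A, x * y ∈ A) {k : ℕ} (hk : 1 ≤ k) {x : F} (hx : x ≠ 0)
    (hno : ∀ f ∈ Fintype.piFinset (fun _ : Fin k => A), ∀ b ∈ A, ∑ i, f i ≠ x * b) :
    (#A : ℝ) ^ k < √(Fintype.card F) ^ (k + 1) := by
  set q : ℝ := (Fintype.card F : ℝ)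
  have hq : 0 < √q := Real.sqrt_pos.2 (Nat.cast_pos.2 Fintype.card_pos)
  rcases (#A).eq_zero_or_pos with hA | hA
  · rw [hA, Nat.cast_zero, zero_pow (by omega)]
    positivity
  have hA' : (0 : ℝ) < #A := Nat.cast_pos.2 hA
  refine lt_of_mul_lt_mul_right ?_ hA'.le
  calc (#A : ℝ) ^ k * #A = #A ^ (k + 1) := (pow_succ _ _).symm
    _ ≤ √q ^ (k - 1) * (q * #A - #A ^ 2) := card_pow_succ_le hψ h0 hmul hk hx hno
    _ < √q ^ (k - 1) * (√q ^ 2 * #A) := by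
        rw [Real.sq_sqrt (Nat.cast_nonneg _)]
        gcongr
        nlinarith
    _ = √q ^ (k + 1) * #A := by
        rw [← mul_assoc, ← pow_add, show k - 1 + 2 = k + 1 by omega]

theorem exists_sum_eq_of_sqrt_pow_le_card_pow (hψ : ψ.IsPrimitive) (h0 : (0 : F) ∉ A)
    (hmul : ∀ x ∈ A, ∀ y ∈ A, x * y ∈ A) (hinv : ∀ x ∈ A, x⁻¹ ∈ A) {k : ℕ} (hk : 1 ≤ k)
    (hA : √(Fintype.card F) ^ (k + 1) ≤ (#A : ℝ) ^ k) {x : F} (hx : x ≠ 0) :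
    ∃ f : Fin k → F, (∀ i, f i ∈ A) ∧ ∑ i, f i = x := by
  by_contra! hno
  exact (card_pow_lt_sqrt_pow hψ h0 hmul hk hx (sum_ne_mul_of_sum_ne h0 hmul hinv hno)).not_ge hA

end Field

lemma rpow_half_add_inv_two_mul_pow {y : ℝ} (hy : 0 ≤ y) {k : ℕ} (hk : k ≠ 0) :
    (y ^ ((1 : ℝ) / 2 + 1 / (2 * (k : ℝ)))) ^ k = √y ^ (k + 1) := by
  rw [Real.sqrt_eq_rpow, ← Real.rpow_natCast _ k, ← Real.rpow_natCast _ (k + 1),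
    ← Real.rpow_mul hy, ← Real.rpow_mul hy]
  congr 1
  field_simp
  push_cast
  ring

theorem stmt1 (p k : ℕ) (hp : p.Prime) (hk : 1 ≤ k) (A : Finset (ZMod p))
    (hA : mulSubgroup p A)
    (hlarge : (p : ℝ) ^ ((1 : ℝ) / 2 + 1 / (2 * (k : ℝ))) < A.card) :
    ∀ x : ZMod p, x ≠ 0 →
      ∃ f : Fin k → ZMod p, (∀ i, f i ∈ A) ∧ ∑ i, f i = x := by
  have := Fact.mk hp
  obtain ⟨h0, -, hmul, hinv⟩ := hA
  intro x hx
  refine exists_sum_eq_of_sqrt_pow_le_card_pow (ZMod.isPrimitive_stdAddChar p) h0 hmul hinv hk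
    ?_ hx
  rw [ZMod.card, ← rpow_half_add_inv_two_mul_pow (Nat.cast_nonneg p) (by omega : k ≠ 0)]
  exact (pow_lt_pow_left₀ hlarge (by positivity) (by omega)).le
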